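/- arXiv:2111.06222 — 3 statements merged into one kernel-verified Lean document; each statement's English description precedes it below -/
import Mathlib

section
/- Let 0 < ε < 1 and C ∈ (ε, ∞). Then there exist a constant K > 0 and m₀ ∈ ℕ such that for every natural number m ≥ m₀, sup over γ ∈ [ε, C] of | (γ/m) · ∑_{j=1}^{m} (j/m)^{γ−1} − 1 | ≤ K / m^{ε}. In other words, sup_{ε ≤ γ ≤ C} | (γ/m) ∑_{j=1}^m (j/m)^{γ−1} − 1 | = O(m^{−ε}) as m → ∞, uniformly over γ in the compact interval [ε, C]. -/
/-!
Write `S = ∑_{j=1}^m j^(γ-1)`, so that the quantity in question is `γ S / m^γ - 1`.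
By the mean value theorem `(k+1)^γ - k^γ = γ c^(γ-1)` for some `c ∈ (k, k+1)`, and
`x ↦ x^(γ-1)` is monotone in one direction or the other according as `γ ≥ 1` or `γ ≤ 1`.
Comparing `γ S` termwise with the telescoping sum `m^γ = ∑ ((k+1)^γ - k^γ)` gives
`-1 ≤ γ S - m^γ ≤ γ m^(γ-1)`, hence the error is at most `m^(-γ) + γ/m ≤ (1 + C) m^(-ε)`
because `ε ≤ γ ≤ C` and `ε < 1`.
-/

open Finset

namespace Real

variable {γ x : ℝ}

lemma exists_rpow_add_one_sub_rpow_eq (hγ : 0 < γ) (hx : 0 ≤ x) :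
    ∃ c ∈ Set.Ioo x (x + 1), (x + 1) ^ γ - x ^ γ = γ * c ^ (γ - 1) := by
  have hcont : ContinuousOn (fun y : ℝ => y ^ γ) (Set.Icc x (x + 1)) := fun y _ =>
    (continuousAt_rpow_const y γ (Or.inr hγ.le)).continuousWithinAt
  have hderiv : ∀ y ∈ Set.Ioo x (x + 1),
      HasDerivAt (fun y : ℝ => y ^ γ) (γ * y ^ (γ - 1)) y :=
    fun y hy => hasDerivAt_rpow_const (Or.inl (hx.trans_lt hy.1).ne')
  obtain ⟨c, hc, hslope⟩ := exists_hasDerivAt_eq_slope _ _ (lt_add_one x) hcont hderiv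
  exact ⟨c, hc, by rw [hslope, add_sub_cancel_left, div_one]⟩

lemma mul_rpow_sub_one_le_rpow_add_one_sub_rpow_of_one_le (hγ : 1 ≤ γ) (hx : 0 ≤ x) :
    γ * x ^ (γ - 1) ≤ (x + 1) ^ γ - x ^ γ := by
  obtain ⟨c, hc, heq⟩ := exists_rpow_add_one_sub_rpow_eq (zero_lt_one.trans_le hγ) hx
  rw [heq]
  exact mul_le_mul_of_nonneg_left (rpow_le_rpow hx hc.1.le (by linarith)) (by linarith)

lemma rpow_add_one_sub_rpow_le_mul_add_one_rpow_sub_one_of_one_le (hγ : 1 ≤ γ) (hx : 0 ≤ x) :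
    (x + 1) ^ γ - x ^ γ ≤ γ * (x + 1) ^ (γ - 1) := by
  obtain ⟨c, hc, heq⟩ := exists_rpow_add_one_sub_rpow_eq (zero_lt_one.trans_le hγ) hx
  rw [heq]
  exact mul_le_mul_of_nonneg_left (rpow_le_rpow (hx.trans hc.1.le) hc.2.le (by linarith))
    (by linarith)

lemma mul_add_one_rpow_sub_one_le_rpow_add_one_sub_rpow_of_le_one (hγ₀ : 0 < γ)
    (hγ₁ : γ ≤ 1) (hx : 0 ≤ x) : γ * (x + 1) ^ (γ - 1) ≤ (x + 1) ^ γ - x ^ γ := by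
  obtain ⟨c, hc, heq⟩ := exists_rpow_add_one_sub_rpow_eq hγ₀ hx
  rw [heq]
  exact mul_le_mul_of_nonneg_left
    (rpow_le_rpow_of_nonpos (hx.trans_lt hc.1) hc.2.le (by linarith)) hγ₀.le

lemma rpow_add_one_sub_rpow_le_mul_rpow_sub_one_of_le_one (hγ₀ : 0 < γ) (hγ₁ : γ ≤ 1)
    (hx : 0 < x) : (x + 1) ^ γ - x ^ γ ≤ γ * x ^ (γ - 1) := by
  obtain ⟨c, hc, heq⟩ := exists_rpow_add_one_sub_rpow_eq hγ₀ hx.le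
  rw [heq]
  exact mul_le_mul_of_nonneg_left (rpow_le_rpow_of_nonpos hx hc.1.le (by linarith)) hγ₀.le

end Real

section PowerSum

open Real

variable {γ : ℝ}

lemma rpow_le_mul_sum_rpow_sub_one_of_one_le (hγ : 1 ≤ γ) (m : ℕ) :
    (m : ℝ) ^ γ ≤ γ * ∑ j ∈ Icc 1 m, (j : ℝ) ^ (γ - 1) := by
  induction m with
  | zero => simp [zero_rpow (by linarith : γ ≠ 0)]
  | succ m ih =>
    rw [sum_Icc_succ_top (by omega), mul_add, Nat.cast_succ]
    linarith [rpow_add_one_sub_rpow_le_mul_add_one_rpow_sub_one_of_one_le hγ m.cast_nonneg]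

lemma mul_sum_rpow_sub_one_le_rpow_add_of_one_le (hγ : 1 ≤ γ) (m : ℕ) :
    γ * ∑ j ∈ Icc 1 m, (j : ℝ) ^ (γ - 1) ≤
      (m : ℝ) ^ γ + γ * (m : ℝ) ^ (γ - 1) := by
  induction m with
  | zero => simp; positivity
  | succ m ih =>
    rw [sum_Icc_succ_top (by omega), mul_add, Nat.cast_succ]
    linarith [mul_rpow_sub_one_le_rpow_add_one_sub_rpow_of_one_le hγ m.cast_nonneg]

lemma rpow_add_one_sub_one_le_mul_sum_rpow_sub_one_of_le_one (hγ₀ : 0 < γ) (hγ₁ : γ ≤ 1)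
    (m : ℕ) :
    ((m : ℝ) + 1) ^ γ - 1 ≤ γ * ∑ j ∈ Icc 1 m, (j : ℝ) ^ (γ - 1) := by
  induction m with
  | zero => simp
  | succ m ih =>
    rw [sum_Icc_succ_top (by omega), mul_add, Nat.cast_succ]
    linarith [rpow_add_one_sub_rpow_le_mul_rpow_sub_one_of_le_one hγ₀ hγ₁
      (by positivity : (0 : ℝ) < m + 1)]

lemma mul_sum_rpow_sub_one_le_rpow_of_le_one (hγ₀ : 0 < γ) (hγ₁ : γ ≤ 1) (m : ℕ) :
    γ * ∑ j ∈ Icc 1 m, (j : ℝ) ^ (γ - 1) ≤ (m : ℝ) ^ γ := by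
  induction m with
  | zero => simp [zero_rpow hγ₀.ne']
  | succ m ih =>
    rw [sum_Icc_succ_top (by omega), mul_add, Nat.cast_succ]
    linarith [mul_add_one_rpow_sub_one_le_rpow_add_one_sub_rpow_of_le_one hγ₀ hγ₁
      m.cast_nonneg]

lemma abs_mul_sum_rpow_sub_one_sub_rpow_le (hγ : 0 < γ) (m : ℕ) :
    |γ * ∑ j ∈ Icc 1 m, (j : ℝ) ^ (γ - 1) - (m : ℝ) ^ γ| ≤
      1 + γ * (m : ℝ) ^ (γ - 1) := by
  have hm : (m : ℝ) ^ γ ≤ ((m : ℝ) + 1) ^ γ := by gcongr; linarith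
  have hpos : 0 ≤ γ * (m : ℝ) ^ (γ - 1) := by positivity
  rw [abs_le]
  rcases le_total γ 1 with hγ₁ | hγ₁
  · constructor
    · linarith [rpow_add_one_sub_one_le_mul_sum_rpow_sub_one_of_le_one hγ hγ₁ m]
    · linarith [mul_sum_rpow_sub_one_le_rpow_of_le_one hγ hγ₁ m]
  · constructor
    · linarith [rpow_le_mul_sum_rpow_sub_one_of_one_le hγ₁ m]
    · linarith [mul_sum_rpow_sub_one_le_rpow_add_of_one_le hγ₁ m]

end PowerSum

/-- Lemma 1 of Robinson (1995): uniformly over `γ ∈ [ε, C]`,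
`|(γ/m) ∑_{j=1}^m (j/m)^(γ-1) - 1| = O(m^{-ε})` as `m → ∞`. -/
theorem robinson_lemma1 (ε C : ℝ) (hε0 : 0 < ε) (hε1 : ε < 1) (hC : ε < C) :
    ∃ K > (0 : ℝ), ∃ m₀ : ℕ, ∀ m : ℕ, m₀ ≤ m → ∀ γ ∈ Set.Icc ε C,
      |γ / m * ∑ j ∈ Finset.Icc 1 m, ((j : ℝ) / m) ^ (γ - 1) - 1| ≤ K / (m : ℝ) ^ ε := by
  refine ⟨1 + C, by linarith, 1, fun m hm γ ⟨hεγ, hγC⟩ => ?_⟩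
  have hγ : 0 < γ := hε0.trans_le hεγ
  have hm₀ : (0 : ℝ) < m := by exact_mod_cast hm
  have hm₁ : (1 : ℝ) ≤ m := by exact_mod_cast hm
  have hmγ : (0 : ℝ) < (m : ℝ) ^ γ := by positivity
  have hrescale : γ / m * ∑ j ∈ Finset.Icc 1 m, ((j : ℝ) / m) ^ (γ - 1) - 1
      = (γ * ∑ j ∈ Finset.Icc 1 m, (j : ℝ) ^ (γ - 1) - (m : ℝ) ^ γ) /
        (m : ℝ) ^ γ := by
    simp_rw [Real.div_rpow (Nat.cast_nonneg _) hm₀.le, ← Finset.sum_div,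
      Real.rpow_sub_one hm₀.ne']
    field_simp
  calc |γ / m * ∑ j ∈ Finset.Icc 1 m, ((j : ℝ) / m) ^ (γ - 1) - 1|
      ≤ (1 + γ * (m : ℝ) ^ (γ - 1)) / (m : ℝ) ^ γ := by
        rw [hrescale, abs_div, abs_of_pos hmγ]
        gcongr
        exact abs_mul_sum_rpow_sub_one_sub_rpow_le hγ m
    _ = 1 / (m : ℝ) ^ γ + γ / (m : ℝ) ^ (1 : ℝ) := by
        rw [Real.rpow_sub_one hm₀.ne', Real.rpow_one]
        field_simp
    _ ≤ 1 / (m : ℝ) ^ ε + C / (m : ℝ) ^ ε := by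
        gcongr ?_ + ?_
        · exact div_le_div_of_nonneg_left zero_le_one (by positivity)
            (Real.rpow_le_rpow_of_exponent_le hm₁ hεγ)
        · exact div_le_div₀ (by linarith) hγC (by positivity)
            (Real.rpow_le_rpow_of_exponent_le hm₁ hε1.le)
    _ = (1 + C) / (m : ℝ) ^ ε := by ring
end

section
/- For every natural number m ≥ 2, | (1/m) · ∑_{j=1}^{m} log j − log m + 1 | ≤ (2 + log(m − 1)) / m. -/
/-!
Writing `log m! = ∑_{j=1}^m log j`, the quantity inside the absolute value is
`E / m` with `E = log m! - m log m + m`. Stirling's lower bound gives `E ≥ 0`, while the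
Stirling sequence `m! / (√(2m) (m/e)^m)` is antitone, so it is at most its first term `e / √2`;
this gives `E ≤ 1 + (log m) / 2`, and `m ≤ 2 (m - 1)` with `log 2 < 1` finishes.
-/

open Real Finset
open scoped Nat

theorem sum_log_Icc_eq_log_factorial (n : ℕ) :
    ∑ j ∈ Icc 1 n, log (j : ℝ) = log (n ! : ℝ) := by
  induction n with
  | zero => simp
  | succ n ih =>
    rw [sum_Icc_succ_top (by omega), ih, Nat.factorial_succ, Nat.cast_mul,
      log_mul (by positivity) (by positivity), add_comm]

namespace Stirling

theorem mul_log_sub_le_log_factorial (n : ℕ) : n * log n - n ≤ log (n ! : ℝ) := by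
  rcases eq_or_ne n 0 with rfl | hn
  · simp
  have hlog_n : 0 ≤ log (n : ℝ) := log_natCast_nonneg n
  have hlog_two_pi : 0 ≤ log (2 * π) := log_nonneg (by linarith [pi_gt_three])
  linarith [le_log_factorial_stirling hn]

theorem log_factorial_le (n : ℕ) : log (n ! : ℝ) ≤ n * log n - n + log n / 2 + 1 := by
  rcases n with _ | k
  · simp
  have hle := log_stirlingSeq'_antitone (Nat.zero_le k)
  simp only [Function.comp_apply, Nat.succ_eq_add_one, log_stirlingSeq_formula] at hle
  have hk : (0 : ℝ) < ((k + 1 : ℕ) : ℝ) := by positivity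
  rw [log_mul two_ne_zero hk.ne', log_div hk.ne' (exp_pos 1).ne', log_exp] at hle
  simp only [zero_add, Nat.factorial_one, Nat.cast_one, log_one, mul_one, one_div, log_inv,
    log_exp] at hle
  linarith

end Stirling

theorem log_le_log_two_add_log_sub_one {x : ℝ} (hx : 2 ≤ x) :
    log x ≤ log 2 + log (x - 1) := by
  rw [← log_mul two_ne_zero (by linarith)]
  exact log_le_log (by linarith) (by linarith)

/-- Lemma 2 of Robinson (1995): for `m ≥ 2`,
`|(1/m) ∑_{j=1}^m log j - log m + 1| ≤ (2 + log (m-1)) / m`. -/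
theorem robinson_lemma2 (m : ℕ) (hm : 2 ≤ m) :
    |(1 / (m : ℝ)) * ∑ j ∈ Finset.Icc 1 m, Real.log j - Real.log m + 1| ≤
      (2 + Real.log ((m : ℝ) - 1)) / m := by
  have hm_pos : (0 : ℝ) < m := by positivity
  have hm_two : (2 : ℝ) ≤ m := by exact_mod_cast hm
  set E := log (m ! : ℝ) - m * log m + m with hE
  have hrewrite : (1 / (m : ℝ)) * ∑ j ∈ Icc 1 m, log j - log m + 1 = E / m := by
    rw [sum_log_Icc_eq_log_factorial, hE]
    field_simp
  rw [hrewrite, abs_div, abs_of_pos hm_pos, div_le_div_iff_of_pos_right hm_pos, abs_le]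
  have hE_nonneg : 0 ≤ E := by linarith [Stirling.mul_log_sub_le_log_factorial m]
  have hE_le : E ≤ 1 + log m / 2 := by linarith [Stirling.log_factorial_le m]
  have hlog_m : 0 ≤ log (m : ℝ) := log_natCast_nonneg m
  have hlog_pred : 0 ≤ log ((m : ℝ) - 1) := log_nonneg (by linarith)
  have hlog_m_le := log_le_log_two_add_log_sub_one hm_two
  constructor <;> linarith [log_two_lt_d9]
end

section
/- Let l ≥ 1 and let x_1, …, x_l be real numbers with x_i > −1/2 for all i. Then the l × l real symmetric matrix M defined by M_{pq} = cos( π (x_p − x_q) / 2 ) / (1 + x_p + x_q) is positive semidefinite. -/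
/-!
`cos (π (x_p - x_q) / 2)` is the Gram kernel of the vectors `(cos (π x_p / 2), sin (π x_p / 2))`,
and `1 / (1 + x_p + x_q) = ∫₀¹ t ^ x_p * t ^ x_q dt` is the Gram matrix of the functions
`t ↦ t ^ x_p`, which lie in `L²(0, 1)` because `x_p > -1/2`. Both factors are therefore positive
semidefinite, and so is their entrywise product by the Schur product theorem.
-/

open MeasureTheory Matrix Real Set

theorem integral_Ioc_zero_one_rpow_mul_rpow {a b : ℝ} (h : -1 < a + b) :
    ∫ t in Ioc 0 1, t ^ a * t ^ b = (1 + a + b)⁻¹ := by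
  rw [setIntegral_congr_fun measurableSet_Ioc fun t ht => (rpow_add ht.1 a b).symm,
    ← intervalIntegral.integral_of_le zero_le_one, integral_rpow (.inl h),
    zero_rpow (by linarith), one_rpow]
  ring

theorem memLp_two_rpow_Ioc_zero_one {a : ℝ} (ha : -(1 / 2) < a) :
    MemLp (fun t : ℝ => t ^ a) 2 (volume.restrict (Ioc 0 1)) := by
  refine (memLp_two_iff_integrable_sq (by fun_prop)).2 ?_
  refine IntegrableOn.congr_fun (f := fun t : ℝ => t ^ (a + a)) ?_
    (fun t ht => by simp only [sq, rpow_add ht.1]) measurableSet_Ioc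
  exact (intervalIntegrable_iff_integrableOn_Ioc_of_le zero_le_one).1
    (intervalIntegral.intervalIntegrable_rpow' (by linarith))

namespace Matrix

variable {ι : Type*} [Finite ι]

theorem posSemidef_of_integral_mul {α : Type*} [MeasurableSpace α] {μ : Measure α}
    {f : ι → α → ℝ} (hf : ∀ i, MemLp (f i) 2 μ) :
    (of fun i j => ∫ a, f i a * f j a ∂μ).PosSemidef := by
  have h_gram : (of fun i j => ∫ a, f i a * f j a ∂μ) = gram ℝ fun i => (hf i).toLp (f i) := by
    ext i j
    rw [gram_apply, L2.inner_def, of_apply]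
    refine integral_congr_ae ?_
    filter_upwards [(hf i).coeFn_toLp, (hf j).coeFn_toLp] with a hi hj
    simp [hi, hj, mul_comm]
  exact h_gram ▸ posSemidef_gram ℝ _

theorem posSemidef_cos_sub (a : ι → ℝ) : (of fun i j => cos (a i - a j)).PosSemidef := by
  have h_sum : (of fun i j => cos (a i - a j)) =
      vecMulVec (cos ∘ a) (cos ∘ a) + vecMulVec (sin ∘ a) (sin ∘ a) := by
    ext i j
    simp [vecMulVec_apply, cos_sub]
  exact h_sum ▸ (posSemidef_vecMulVec_self_star _).add (posSemidef_vecMulVec_self_star _)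

theorem posSemidef_inv_one_add_add {x : ι → ℝ} (hx : ∀ i, -(1 / 2) < x i) :
    (of fun i j => (1 + x i + x j)⁻¹).PosSemidef := by
  have h_int : (of fun i j => (1 + x i + x j)⁻¹) =
      of fun i j => ∫ t in Ioc 0 1, t ^ x i * t ^ x j := by
    ext i j
    rw [of_apply, of_apply, integral_Ioc_zero_one_rpow_mul_rpow (by linarith [hx i, hx j])]
  exact h_int ▸ posSemidef_of_integral_mul fun i => memLp_two_rpow_Ioc_zero_one (hx i)

end Matrix

theorem cos_div_matrix_posSemidef_general (l : ℕ) (x : Fin l → ℝ)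
    (hx : ∀ i, -(1 / 2) < x i) :
    (Matrix.of fun p q : Fin l =>
      Real.cos (Real.pi * (x p - x q) / 2) / (1 + x p + x q)).PosSemidef := by
  have h_schur : (Matrix.of fun p q : Fin l =>
      Real.cos (Real.pi * (x p - x q) / 2) / (1 + x p + x q)) =
      of (fun p q => cos (π * x p / 2 - π * x q / 2)) ⊙ of (fun p q => (1 + x p + x q)⁻¹) := by
    ext p q
    rw [hadamard_apply, of_apply, of_apply, of_apply, ← sub_div, ← mul_sub]
    exact div_eq_mul_inv _ _
  exact h_schur ▸ (posSemidef_cos_sub _).hadamard (posSemidef_inv_one_add_add hx)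

/-- The matrix `M_{pq} = cos(π(x_p - x_q)/2)/(1 + x_p + x_q)` (with all
`x_i > -1/2`) is positive semidefinite: it is `Re[U] ⊙ V` from the paper's
function `H(d)`, the real part of a Gram matrix in `L²(0,1)`. -/
theorem cos_div_matrix_posSemidef (l : ℕ) (hl : 1 ≤ l) (x : Fin l → ℝ)
    (hx : ∀ i, -(1 / 2) < x i) :
    (Matrix.of fun p q : Fin l =>
      Real.cos (Real.pi * (x p - x q) / 2) / (1 + x p + x q)).PosSemidef :=
  cos_div_matrix_posSemidef_general l x hx
end
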